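/- Assume the bipartite Bloch data of the context and that ρ is separable. Then for all real column vectors u ∈ ℝ^{p_1} and v ∈ ℝ^{p_2}, the block matrix [[u·v^T, u·(T^{(B)})^T], [T^{(A)}·v^T, T^{(AB)}]] satisfies ‖·‖_tr ≤ √( (‖u‖_F² + (d_A²−d_A)/κ_A)·(‖v‖_F² + (d_B²−d_B)/κ_B) ); in particular, when κ_A = κ_B = 2 this recovers Zhu, Zheng and Fei's separability criterion. -/

import Mathlib

open Matrix ComplexOrder
open scoped Kronecker

/-- The trace norm `‖A‖_tr = Tr((A†A)^{1/2})` of a complex matrix (the sum of its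
singular values). -/
noncomputable def traceNorm {m n : Type*} [Fintype m] [Fintype n] [DecidableEq n]
    (A : Matrix m n ℂ) : ℝ :=
  ((Matrix.posSemidef_conjTranspose_mul_self A).1.eigenvectorUnitary.1 *
    diagonal (((↑) : ℝ → ℂ) ∘ (√·) ∘ (Matrix.posSemidef_conjTranspose_mul_self A).1.eigenvalues) *
    (star (Matrix.posSemidef_conjTranspose_mul_self A).1.eigenvectorUnitary :
      Matrix n n ℂ)).trace.re

open scoped InnerProductSpace

/-! Write the separable state as `ρ = ∑ₜ wₜ σₜ ⊗ τₜ` with pure `σₜ, τₜ`. Pairing the Bloch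
expansion of `ρ` with `G_kᴴ ⊗ 1`, `1 ⊗ G_lᴴ` and `G_kᴴ ⊗ G_lᴴ` shows that `T^{(A)}`, `T^{(B)}`
and `T^{(AB)}` are the `w`-averages of `rₜ`, `sₜ` and `rₜ sₜᵀ`, where `rₜ, sₜ` are the Bloch
vectors of `σₜ, τₜ`. Hence the block matrix is `∑ₜ wₜ (u; rₜ)(v; sₜ)ᵀ`, whose trace norm is at
most `∑ₜ wₜ ‖(u; rₜ)‖ ‖(v; sₜ)‖`. For a pure state `‖σ - 1/d‖_F² = 1 - 1/d`, so Bessel's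
inequality for the orthogonal family `G` gives `‖rₜ‖² ≤ (d² - d)/κ`.

The trace norm of `A = ∑ᵢ xᵢ yᵢᵀ` is `∑ₖ ‖A bₖ‖` for an eigenbasis `bₖ` of `AᴴA`, and the
vectors `A bₖ` are pairwise orthogonal. Normalising them and expanding `A`, Cauchy–Schwarz and
Bessel's inequality for both orthonormal families give `∑ₖ ‖A bₖ‖ ≤ ∑ᵢ ‖xᵢ‖ ‖yᵢ‖`. -/

section InnerProduct

variable {𝕜 E F : Type*} [RCLike 𝕜] [NormedAddCommGroup E] [InnerProductSpace 𝕜 E]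
  [NormedAddCommGroup F] [InnerProductSpace 𝕜 F]

theorem Orthonormal.sum_norm_inner_mul_norm_inner_le {ι : Type*} {u : ι → E} {v : ι → F}
    (hu : Orthonormal 𝕜 u) (hv : Orthonormal 𝕜 v) (s : Finset ι) (x : E) (y : F) :
    ∑ k ∈ s, ‖⟪u k, x⟫_𝕜‖ * ‖⟪v k, y⟫_𝕜‖ ≤ ‖x‖ * ‖y‖ :=
  (Real.sum_mul_le_sqrt_mul_sqrt s _ _).trans <| mul_le_mul
    ((Real.sqrt_le_left (norm_nonneg x)).2 (hu.sum_inner_products_le x))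
    ((Real.sqrt_le_left (norm_nonneg y)).2 (hv.sum_inner_products_le y))
    (Real.sqrt_nonneg _) (norm_nonneg x)

theorem orthonormal_normalize_of_pairwise_inner_eq_zero {ι : Type*} {w : ι → E}
    (hw : Pairwise fun k l => ⟪w k, w l⟫_𝕜 = 0) :
    Orthonormal 𝕜 fun k : {k // w k ≠ 0} => (‖w k‖⁻¹ : 𝕜) • w k :=
  ⟨fun k => norm_smul_inv_norm k.2, fun k l hkl => by
    simp [inner_smul_left, inner_smul_right, hw (Subtype.coe_injective.ne hkl)]⟩

theorem inner_inv_norm_smul_self (w : E) : ⟪(‖w‖⁻¹ : 𝕜) • w, w⟫_𝕜 = ‖w‖ := by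
  rcases eq_or_ne w 0 with rfl | hw
  · simp
  have : (‖w‖ : 𝕜) ≠ 0 := RCLike.ofReal_ne_zero.2 (norm_ne_zero_iff.2 hw)
  simp only [inner_smul_left, inner_self_eq_norm_sq_to_K, map_inv₀, RCLike.conj_ofReal]
  field_simp

theorem sum_norm_le_sum_norm_mul_norm_of_pairwise_inner_eq_zero {ι κ : Type*} [Fintype ι]
    [Fintype κ] {b : κ → F} (hb : Orthonormal 𝕜 b) (x : ι → E) (y : ι → F) (T : F → E)
    (hT : ∀ z, T z = ∑ i, ⟪y i, z⟫_𝕜 • x i)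
    (horth : Pairwise fun k l => ⟪T (b k), T (b l)⟫_𝕜 = 0) :
    ∑ k, ‖T (b k)‖ ≤ ∑ i, ‖x i‖ * ‖y i‖ := by
  classical
  set u := fun k : {k // T (b k) ≠ 0} => (‖T (b k)‖⁻¹ : 𝕜) • T (b k)
  have hu : Orthonormal 𝕜 u := orthonormal_normalize_of_pairwise_inner_eq_zero horth
  have hterm (k : {k // T (b k) ≠ 0}) :
      ‖T (b k)‖ ≤ ∑ i, ‖⟪u k, x i⟫_𝕜‖ * ‖⟪b k, y i⟫_𝕜‖ :=
    calc ‖T (b k)‖ = ‖⟪u k, T (b k)⟫_𝕜‖ := by simp [u, inner_inv_norm_smul_self]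
      _ = ‖∑ i, ⟪y i, b k⟫_𝕜 * ⟪u k, x i⟫_𝕜‖ := by
        simp only [hT (b k), inner_sum, inner_smul_right]
      _ ≤ ∑ i, ‖⟪u k, x i⟫_𝕜‖ * ‖⟪b k, y i⟫_𝕜‖ := by
        refine (norm_sum_le _ _).trans_eq (Finset.sum_congr rfl fun i _ => ?_)
        rw [norm_mul, norm_inner_symm, mul_comm]
  calc ∑ k, ‖T (b k)‖ = ∑ k : {k // T (b k) ≠ 0}, ‖T (b k)‖ := by
        rw [← Finset.subtype_univ, Finset.sum_subtype_eq_sum_filter (f := fun k => ‖T (b k)‖),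
          Finset.sum_filter_of_ne fun k _ hk => by simpa using hk]
    _ ≤ ∑ i, ∑ k : {k // T (b k) ≠ 0}, ‖⟪u k, x i⟫_𝕜‖ * ‖⟪b k, y i⟫_𝕜‖ :=
        (Finset.sum_le_sum fun k _ => hterm k).trans_eq Finset.sum_comm
    _ ≤ ∑ i, ‖x i‖ * ‖y i‖ := Finset.sum_le_sum fun i _ =>
        hu.sum_norm_inner_mul_norm_inner_le (hb.comp _ Subtype.coe_injective) _ _ _

theorem sum_norm_inner_sq_le_of_inner_eq_ite {ι : Type*} [DecidableEq ι] {g : ι → E} {κ : ℝ}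
    (hκ : 0 < κ) (hg : ∀ i j, ⟪g i, g j⟫_𝕜 = if i = j then (κ : 𝕜) else 0) (s : Finset ι)
    (x : E) : ∑ i ∈ s, ‖⟪g i, x⟫_𝕜‖ ^ 2 ≤ κ * ‖x‖ ^ 2 := by
  have hκ' : ((√κ : ℝ) : 𝕜) ≠ 0 := RCLike.ofReal_ne_zero.2 (Real.sqrt_pos.2 hκ).ne'
  have hsq : ((√κ : ℝ) : 𝕜) * (√κ : ℝ) = κ := by
    rw [← RCLike.ofReal_mul, Real.mul_self_sqrt hκ.le]
  have hf : Orthonormal 𝕜 fun i => ((√κ : ℝ) : 𝕜)⁻¹ • g i := by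
    refine orthonormal_iff_ite.2 fun i j => ?_
    simp only [inner_smul_left, inner_smul_right, hg, map_inv₀, RCLike.conj_ofReal]
    split_ifs
    · rw [← hsq]; field_simp
    · simp
  calc ∑ i ∈ s, ‖⟪g i, x⟫_𝕜‖ ^ 2 = κ * ∑ i ∈ s, ‖⟪((√κ : ℝ) : 𝕜)⁻¹ • g i, x⟫_𝕜‖ ^ 2 := by
        simp only [inner_smul_left, norm_mul, map_inv₀, RCLike.conj_ofReal, norm_inv,
          RCLike.norm_ofReal, mul_pow, ← Finset.mul_sum, abs_of_nonneg (Real.sqrt_nonneg κ),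
          inv_pow, Real.sq_sqrt hκ.le]
        field_simp
    _ ≤ κ * ‖x‖ ^ 2 := mul_le_mul_of_nonneg_left (hf.sum_inner_products_le x) hκ.le

end InnerProduct

namespace Matrix

theorem inner_toLp_uncurry {𝕜 m n : Type*} [RCLike 𝕜] [Fintype m] [Fintype n]
    (X Y : Matrix m n 𝕜) :
    ⟪WithLp.toLp 2 (Function.uncurry X), WithLp.toLp 2 (Function.uncurry Y)⟫_𝕜 =
      (Xᴴ * Y).trace := by
  simp only [EuclideanSpace.inner_toLp_toLp, dotProduct, Fintype.sum_prod_type, trace, diag,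
    mul_apply, conjTranspose_apply, Pi.star_apply]
  rw [Finset.sum_comm]
  exact Finset.sum_congr rfl fun _ _ => Finset.sum_congr rfl fun _ _ => mul_comm _ _

variable {𝕜 m n : Type*} [RCLike 𝕜] [Fintype m] [Fintype n] [DecidableEq n]

theorem inner_toEuclideanLin_toEuclideanLin [DecidableEq m] (A : Matrix m n 𝕜)
    (v w : EuclideanSpace 𝕜 n) :
    ⟪A.toEuclideanLin v, A.toEuclideanLin w⟫_𝕜 = ⟪v, (Aᴴ * A).toEuclideanLin w⟫_𝕜 := by
  rw [← LinearMap.adjoint_inner_right, ← toEuclideanLin_conjTranspose_eq_adjoint]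
  simp

theorem IsHermitian.toEuclideanLin_eigenvectorBasis {A : Matrix n n 𝕜} (hA : A.IsHermitian)
    (j : n) :
    A.toEuclideanLin (hA.eigenvectorBasis j) = (hA.eigenvalues j : 𝕜) • hA.eigenvectorBasis j := by
  rw [toLpLin_apply, hA.mulVec_eigenvectorBasis, RCLike.real_smul_eq_coe_smul (K := 𝕜)]
  rfl

end Matrix

section TraceNorm

variable {m n : Type*} [Fintype m] [Fintype n] [DecidableEq n]

theorem traceNorm_eq_sum_sqrt_eigenvalues (A : Matrix m n ℂ) :
    traceNorm A = ∑ k, √((posSemidef_conjTranspose_mul_self A).1.eigenvalues k) := by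
  rw [traceNorm, trace_mul_cycle,
    (mem_unitaryGroup_iff').mp (posSemidef_conjTranspose_mul_self A).1.eigenvectorUnitary.2,
    Matrix.one_mul, trace_diagonal]
  simp

theorem inner_toEuclideanLin_eigenvectorBasis_conjTranspose_mul_self [DecidableEq m]
    (A : Matrix m n ℂ) (hA : (Aᴴ * A).IsHermitian) (k l : n) :
    ⟪A.toEuclideanLin (hA.eigenvectorBasis k), A.toEuclideanLin (hA.eigenvectorBasis l)⟫_ℂ =
      if k = l then (hA.eigenvalues k : ℂ) else 0 := by
  rw [inner_toEuclideanLin_toEuclideanLin, hA.toEuclideanLin_eigenvectorBasis, inner_smul_right,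
    orthonormal_iff_ite.mp hA.eigenvectorBasis.orthonormal]
  split_ifs with h <;> simp [h]

theorem traceNorm_eq_sum_norm_toEuclideanLin_eigenvectorBasis [DecidableEq m]
    (A : Matrix m n ℂ) (hA : (Aᴴ * A).IsHermitian) :
    traceNorm A = ∑ k, ‖A.toEuclideanLin (hA.eigenvectorBasis k)‖ := by
  rw [traceNorm_eq_sum_sqrt_eigenvalues]
  refine Finset.sum_congr rfl fun k _ => ?_
  rw [@norm_eq_sqrt_re_inner ℂ,
    inner_toEuclideanLin_eigenvectorBasis_conjTranspose_mul_self A hA, if_pos rfl]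
  rfl

theorem traceNorm_sum_vecMulVec_le {ι : Type*} [Fintype ι] [DecidableEq m]
    (x : ι → m → ℂ) (y : ι → n → ℂ) :
    traceNorm (∑ i, vecMulVec (x i) (y i)) ≤
      ∑ i, ‖WithLp.toLp 2 (x i)‖ * ‖WithLp.toLp 2 (y i)‖ := by
  set A := ∑ i, vecMulVec (x i) (y i)
  have hA := (posSemidef_conjTranspose_mul_self A).1
  have hT (z : EuclideanSpace ℂ n) : A.toEuclideanLin z =
      ∑ i, ⟪WithLp.toLp 2 (star (y i)), z⟫_ℂ • WithLp.toLp 2 (x i) := by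
    ext a
    simp [A, toLpLin_apply, EuclideanSpace.inner_eq_star_dotProduct, vecMulVec_mulVec,
      dotProduct_comm]
  have hnorm (i : ι) : ‖WithLp.toLp 2 (star (y i))‖ = ‖WithLp.toLp 2 (y i)‖ := by
    simp [EuclideanSpace.norm_eq]
  rw [traceNorm_eq_sum_norm_toEuclideanLin_eigenvectorBasis A hA]
  simpa only [hnorm] using
    sum_norm_le_sum_norm_mul_norm_of_pairwise_inner_eq_zero hA.eigenvectorBasis.orthonormal
      (fun i => WithLp.toLp 2 (x i)) (fun i => WithLp.toLp 2 (star (y i))) _ hT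
      fun k l hkl =>
        (inner_toEuclideanLin_eigenvectorBasis_conjTranspose_mul_self A hA k l).trans (if_neg hkl)

theorem traceNorm_sum_smul_vecMulVec_le {ι : Type*} [Fintype ι] [DecidableEq m] {w : ι → ℝ}
    (hw0 : ∀ t, 0 ≤ w t) (hw1 : ∑ t, w t = 1) {x : ι → m → ℂ} {y : ι → n → ℂ} {α β : ℝ}
    (hx : ∀ t, ‖WithLp.toLp 2 (x t)‖ ≤ α) (hy : ∀ t, ‖WithLp.toLp 2 (y t)‖ ≤ β) :
    traceNorm (∑ t, w t • vecMulVec (x t) (y t)) ≤ α * β := by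
  have h := traceNorm_sum_vecMulVec_le (fun t => w t • x t) y
  simp only [smul_vecMulVec, WithLp.toLp_smul, norm_smul, Real.norm_eq_abs,
    abs_of_nonneg (hw0 _), mul_assoc] at h
  calc _ ≤ ∑ t, w t * (α * β) := h.trans <| Finset.sum_le_sum fun t _ =>
          mul_le_mul_of_nonneg_left
            (mul_le_mul (hx t) (hy t) (norm_nonneg _) ((norm_nonneg _).trans (hx t))) (hw0 t)
    _ = α * β := by rw [← Finset.sum_mul, hw1, one_mul]

end TraceNorm

section PureState

variable {m ι : Type*} [Fintype m] [Fintype ι] [DecidableEq ι]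

structure IsTracelessOrthogonalFamily (κ : ℝ) (G : ι → Matrix m m ℂ) : Prop where
  trace_eq_zero : ∀ i, (G i).trace = 0
  trace_conjTranspose_mul : ∀ i j, ((G i)ᴴ * G j).trace = if i = j then (κ : ℂ) else 0

/-- If `σ = d⁻¹ (1 + ∑ₖ rₖ Gₖ)` for a traceless orthogonal family `G`, then
`r = blochVector κ G σ`. -/
noncomputable def blochVector (κ : ℝ) (G : ι → Matrix m m ℂ) (σ : Matrix m m ℂ) : ι → ℂ :=
  fun k => (Fintype.card m / κ : ℂ) * ((G k)ᴴ * σ).trace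

theorem sum_norm_trace_conjTranspose_mul_sq_le {G : ι → Matrix m m ℂ} {κ : ℝ} (hκ : 0 < κ)
    (hG : ∀ i j, ((G i)ᴴ * G j).trace = if i = j then (κ : ℂ) else 0) (X : Matrix m m ℂ) :
    ∑ i, ‖((G i)ᴴ * X).trace‖ ^ 2 ≤ κ * (Xᴴ * X).trace.re := by
  have h := sum_norm_inner_sq_le_of_inner_eq_ite hκ
    (𝕜 := ℂ) (g := fun i => WithLp.toLp 2 (Function.uncurry (G i)))
    (fun i j => (inner_toLp_uncurry _ _).trans (hG i j)) Finset.univ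
    (WithLp.toLp 2 (Function.uncurry X))
  simpa only [inner_toLp_uncurry, @norm_sq_eq_re_inner ℂ, RCLike.re_to_complex] using h

theorem Matrix.IsHermitian.trace_conjTranspose_mul_self_sub_smul_one [DecidableEq m]
    {σ : Matrix m m ℂ} (hσ : σ.IsHermitian) (htr : σ.trace = 1) (hidem : σ * σ = σ) :
    ((σ - (Fintype.card m : ℂ)⁻¹ • 1)ᴴ * (σ - (Fintype.card m : ℂ)⁻¹ • 1)).trace =
      1 - (Fintype.card m : ℂ)⁻¹ := by
  simp only [conjTranspose_sub, hσ.eq, conjTranspose_smul, star_inv₀, star_natCast,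
    conjTranspose_one, mul_sub, sub_mul, hidem, Algebra.smul_mul_assoc, one_mul,
    Algebra.mul_smul_comm, mul_one, trace_sub, htr, trace_smul, smul_eq_mul, trace_one, sub_eq_self]
  rcases eq_or_ne (Fintype.card m : ℂ) 0 with hd | hd
  · simp [hd]
  · rw [inv_mul_cancel₀ hd, mul_one, sub_self]

theorem IsTracelessOrthogonalFamily.sum_norm_blochVector_sq_le [DecidableEq m]
    {G : ι → Matrix m m ℂ} {κ : ℝ}    (hG : IsTracelessOrthogonalFamily κ G) (hκ : 0 < κ) {σ : Matrix m m ℂ}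
    (hσ : σ.IsHermitian) (htr : σ.trace = 1) (hidem : σ * σ = σ) :
    ∑ k, ‖blochVector κ G σ k‖ ^ 2 ≤ ((Fintype.card m : ℝ) ^ 2 - Fintype.card m) / κ := by
  set δ := σ - (Fintype.card m : ℂ)⁻¹ • 1
  have hδ (k : ι) : ((G k)ᴴ * δ).trace = ((G k)ᴴ * σ).trace := by
    simp [δ, mul_sub, trace_conjTranspose, hG.trace_eq_zero]
  have h := sum_norm_trace_conjTranspose_mul_sq_le hκ hG.trace_conjTranspose_mul δ
  rw [hσ.trace_conjTranspose_mul_self_sub_smul_one htr hidem] at h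
  simp only [hδ] at h
  set d : ℕ := Fintype.card m
  have hre : (1 - (d : ℂ)⁻¹).re = 1 - (d : ℝ)⁻¹ := by simp
  calc ∑ k, ‖blochVector κ G σ k‖ ^ 2 = ((d : ℝ) / κ) ^ 2 * ∑ k, ‖((G k)ᴴ * σ).trace‖ ^ 2 := by
        simp [blochVector, d, mul_pow, Finset.mul_sum, abs_of_pos hκ]
    _ ≤ ((d : ℝ) / κ) ^ 2 * (κ * (1 - (d : ℝ)⁻¹)) := by rw [← hre]; gcongr
    _ = ((d : ℝ) ^ 2 - d) / κ := by
        rcases eq_or_ne (d : ℝ) 0 with hd | hd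
        · simp [hd]
        · field_simp

theorem IsTracelessOrthogonalFamily.norm_toLp_sumElim_blochVector_le [DecidableEq m]
    {G : ι → Matrix m m ℂ} {κ : ℝ} (hG : IsTracelessOrthogonalFamily κ G) (hκ : 0 < κ)
    {σ : Matrix m m ℂ} (hσ : σ.IsHermitian) (htr : σ.trace = 1) (hidem : σ * σ = σ)
    {p : Type*} [Fintype p] (u : p → ℝ) :
    ‖WithLp.toLp 2 (Sum.elim (fun a => (u a : ℂ)) (blochVector κ G σ))‖ ≤
      √(∑ a, u a ^ 2 + ((Fintype.card m : ℝ) ^ 2 - Fintype.card m) / κ) := by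
  rw [EuclideanSpace.norm_eq]
  gcongr
  simpa [Fintype.sum_sum_type] using hG.sum_norm_blochVector_sq_le hκ hσ htr hidem

end PureState

theorem trace_kronecker_mul_sum_smul_kronecker {m n ι : Type*} [Fintype m] [Fintype n]
    [Fintype ι] (w : ι → ℂ) (σ : ι → Matrix m m ℂ) (τ : ι → Matrix n n ℂ) (X : Matrix m m ℂ)
    (Y : Matrix n n ℂ) :
    ((X ⊗ₖ Y) * ∑ t, w t • (σ t ⊗ₖ τ t)).trace =
      ∑ t, w t * ((X * σ t).trace * (Y * τ t).trace) := by
  simp only [Matrix.mul_sum, Matrix.mul_smul, trace_sum, trace_smul, ← mul_kronecker_mul,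
    trace_kronecker, smul_eq_mul]

section BlochExpansion

variable {m n ιA ιB : Type*} [Fintype m] [DecidableEq m] [Fintype n] [DecidableEq n]
  [Fintype ιA] [Fintype ιB] {GA : ιA → Matrix m m ℂ} {GB : ιB → Matrix n n ℂ} {κA κB : ℝ}

def blochExpansion (GA : ιA → Matrix m m ℂ) (GB : ιB → Matrix n n ℂ) (TA : ιA → ℂ)
    (TB : ιB → ℂ) (TAB : Matrix ιA ιB ℂ) : Matrix (m × n) (m × n) ℂ :=
  (1 : Matrix m m ℂ) ⊗ₖ (1 : Matrix n n ℂ) + ∑ i, TA i • (GA i ⊗ₖ (1 : Matrix n n ℂ))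
    + ∑ j, TB j • ((1 : Matrix m m ℂ) ⊗ₖ GB j) + ∑ i, ∑ j, TAB i j • (GA i ⊗ₖ GB j)

theorem trace_kronecker_mul_blochExpansion (TA : ιA → ℂ) (TB : ιB → ℂ) (TAB : Matrix ιA ιB ℂ)
    (X : Matrix m m ℂ) (Y : Matrix n n ℂ) :
    ((X ⊗ₖ Y) * blochExpansion GA GB TA TB TAB).trace =
      X.trace * Y.trace + ∑ i, TA i * ((X * GA i).trace * Y.trace)
        + ∑ j, TB j * (X.trace * (Y * GB j).trace)
        + ∑ i, ∑ j, TAB i j * ((X * GA i).trace * (Y * GB j).trace) := by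
  simp only [blochExpansion, Matrix.mul_add, Matrix.mul_sum, Matrix.mul_smul, trace_add,
    trace_sum, trace_smul, ← mul_kronecker_mul, trace_kronecker, Matrix.mul_one, smul_eq_mul]

theorem trace_conjTranspose_kronecker_one_mul_blochExpansion [DecidableEq ιA] [DecidableEq ιB]
    (hA : IsTracelessOrthogonalFamily κA GA) (hB : IsTracelessOrthogonalFamily κB GB)
    (TA : ιA → ℂ) (TB : ιB → ℂ) (TAB : Matrix ιA ιB ℂ) (k : ιA) :
    (((GA k)ᴴ ⊗ₖ (1 : Matrix n n ℂ)) * blochExpansion GA GB TA TB TAB).trace =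
      κA * Fintype.card n * TA k := by
  simp only [trace_kronecker_mul_blochExpansion, trace_conjTranspose, hA.trace_eq_zero, star_zero,
    trace_one, zero_mul, hA.trace_conjTranspose_mul, ite_mul, mul_ite, mul_zero,
    Finset.sum_ite_eq, Finset.mem_univ, ↓reduceIte, zero_add, one_mul, hB.trace_eq_zero,
    Finset.sum_const_zero, add_zero]
  ring

theorem trace_one_kronecker_conjTranspose_mul_blochExpansion [DecidableEq ιA] [DecidableEq ιB]
    (hA : IsTracelessOrthogonalFamily κA GA) (hB : IsTracelessOrthogonalFamily κB GB)
    (TA : ιA → ℂ) (TB : ιB → ℂ) (TAB : Matrix ιA ιB ℂ) (l : ιB) :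
    (((1 : Matrix m m ℂ) ⊗ₖ (GB l)ᴴ) * blochExpansion GA GB TA TB TAB).trace =
      κB * Fintype.card m * TB l := by
  simp only [trace_kronecker_mul_blochExpansion, trace_one, trace_conjTranspose,
    hB.trace_eq_zero, star_zero, mul_zero, one_mul, hA.trace_eq_zero, Finset.sum_const_zero,
    add_zero, hB.trace_conjTranspose_mul, mul_ite, Finset.sum_ite_eq, Finset.mem_univ,
    ↓reduceIte, zero_add, zero_mul, ite_self]
  ring

theorem trace_conjTranspose_kronecker_conjTranspose_mul_blochExpansion [DecidableEq ιA]
    [DecidableEq ιB]    (hA : IsTracelessOrthogonalFamily κA GA) (hB : IsTracelessOrthogonalFamily κB GB)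
    (TA : ιA → ℂ) (TB : ιB → ℂ) (TAB : Matrix ιA ιB ℂ) (k : ιA) (l : ιB) :
    (((GA k)ᴴ ⊗ₖ (GB l)ᴴ) * blochExpansion GA GB TA TB TAB).trace = κA * κB * TAB k l := by
  simp only [trace_kronecker_mul_blochExpansion, trace_conjTranspose, hA.trace_eq_zero,
    star_zero, hB.trace_eq_zero, mul_zero, hA.trace_conjTranspose_mul, Finset.sum_const_zero,
    add_zero, hB.trace_conjTranspose_mul, mul_ite, zero_mul, ite_self, ite_mul,
    Finset.sum_ite_eq, Finset.mem_univ, ↓reduceIte, zero_add]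
  ring

theorem blochData_eq_sum_of_separable [DecidableEq ιA] [DecidableEq ιB] [Nonempty m]
    [Nonempty n] (hA : IsTracelessOrthogonalFamily κA GA) (hB : IsTracelessOrthogonalFamily κB GB)
    (hκA : κA ≠ 0) (hκB : κB ≠ 0) {TA : ιA → ℂ} {TB : ιB → ℂ} {TAB : Matrix ιA ιB ℂ}
    {ι : Type*} [Fintype ι] {w : ι → ℝ} {σ : ι → Matrix m m ℂ} {τ : ι → Matrix n n ℂ}
    (hσ : ∀ t, (σ t).trace = 1) (hτ : ∀ t, (τ t).trace = 1)
    (hρ : ((Fintype.card m : ℂ) * Fintype.card n)⁻¹ • blochExpansion GA GB TA TB TAB =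
      ∑ t, (w t : ℂ) • (σ t ⊗ₖ τ t)) :
    TA = ∑ t, w t • blochVector κA GA (σ t) ∧ TB = ∑ t, w t • blochVector κB GB (τ t) ∧
      TAB = ∑ t, w t • vecMulVec (blochVector κA GA (σ t)) (blochVector κB GB (τ t)) := by
  have hpair (X : Matrix m m ℂ) (Y : Matrix n n ℂ) :
      ((Fintype.card m : ℂ) * Fintype.card n)⁻¹ * ((X ⊗ₖ Y) * blochExpansion GA GB TA TB TAB).trace
        = ∑ t, (w t : ℂ) * ((X * σ t).trace * (Y * τ t).trace) := by
    rw [← trace_kronecker_mul_sum_smul_kronecker, ← hρ, Matrix.mul_smul, trace_smul, smul_eq_mul]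
  have hm : (Fintype.card m : ℂ) ≠ 0 := Nat.cast_ne_zero.2 Fintype.card_ne_zero
  have hn : (Fintype.card n : ℂ) ≠ 0 := Nat.cast_ne_zero.2 Fintype.card_ne_zero
  have hκA' : (κA : ℂ) ≠ 0 := Complex.ofReal_ne_zero.2 hκA
  have hκB' : (κB : ℂ) ≠ 0 := Complex.ofReal_ne_zero.2 hκB
  refine ⟨funext fun k => ?_, funext fun l => ?_, ext fun k l => ?_⟩
  · have h := hpair (GA k)ᴴ 1
    rw [trace_conjTranspose_kronecker_one_mul_blochExpansion hA hB] at h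
    calc TA k = Fintype.card m / κA *
          (((Fintype.card m : ℂ) * Fintype.card n)⁻¹ * (κA * Fintype.card n * TA k)) := by
          field_simp
      _ = _ := by
          simp only [h, Matrix.one_mul, hτ, Finset.mul_sum, Finset.sum_apply, Pi.smul_apply,
            blochVector, Complex.real_smul]
          exact Finset.sum_congr rfl fun t _ => by ring
  · have h := hpair 1 (GB l)ᴴ
    rw [trace_one_kronecker_conjTranspose_mul_blochExpansion hA hB] at h
    calc TB l = Fintype.card n / κB *
          (((Fintype.card m : ℂ) * Fintype.card n)⁻¹ * (κB * Fintype.card m * TB l)) := by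
          field_simp
      _ = _ := by
          simp only [h, Matrix.one_mul, hσ, Finset.mul_sum, Finset.sum_apply, Pi.smul_apply,
            blochVector, Complex.real_smul]
          exact Finset.sum_congr rfl fun t _ => by ring
  · have h := hpair (GA k)ᴴ (GB l)ᴴ
    rw [trace_conjTranspose_kronecker_conjTranspose_mul_blochExpansion hA hB] at h
    calc TAB k l = Fintype.card m * Fintype.card n / (κA * κB) *
          (((Fintype.card m : ℂ) * Fintype.card n)⁻¹ * (κA * κB * TAB k l)) := by
          field_simp
      _ = _ := by
          simp only [h, Finset.mul_sum, Matrix.sum_apply, Matrix.smul_apply, vecMulVec_apply,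
            blochVector, Complex.real_smul]
          exact Finset.sum_congr rfl fun t _ => by ring

end BlochExpansion

theorem fromBlocks_vecMulVec_eq_sum_smul_vecMulVec {p q ιA ιB ι : Type*} [Fintype ι]
    {w : ι → ℝ} (hw : ∑ t, w t = 1) (u : p → ℂ) (v : q → ℂ) {TA : ιA → ℂ} {TB : ιB → ℂ}
    {TAB : Matrix ιA ιB ℂ} {a : ι → ιA → ℂ} {b : ι → ιB → ℂ} (hTA : TA = ∑ t, w t • a t)
    (hTB : TB = ∑ t, w t • b t) (hTAB : TAB = ∑ t, w t • vecMulVec (a t) (b t)) :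
    fromBlocks (vecMulVec u v) (vecMulVec u TB) (vecMulVec TA v) TAB =
      ∑ t, w t • vecMulVec (Sum.elim u (a t)) (Sum.elim v (b t)) := by
  subst hTA hTB hTAB
  ext (i | i) (j | j) <;>
    simp only [fromBlocks_apply₁₁, fromBlocks_apply₁₂, fromBlocks_apply₂₁, fromBlocks_apply₂₂,
      vecMulVec_apply, Matrix.sum_apply, Matrix.smul_apply, Finset.sum_apply, Pi.smul_apply,
      Sum.elim_inl, Sum.elim_inr, Complex.real_smul, Finset.mul_sum, Finset.sum_mul]
  · rw [← Finset.sum_mul, ← Complex.ofReal_sum, hw, Complex.ofReal_one, one_mul]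
  all_goals exact Finset.sum_congr rfl fun _ _ => by ring

theorem stmt_4_general
    (dA dB : ℕ) (hdA : 1 ≤ dA) (hdB : 1 ≤ dB)
    (κA κB : ℝ) (hκA : 0 < κA) (hκB : 0 < κB)
    (GA : Fin (dA ^ 2 - 1) → Matrix (Fin dA) (Fin dA) ℂ)
    (GB : Fin (dB ^ 2 - 1) → Matrix (Fin dB) (Fin dB) ℂ)
    (hGAtr : ∀ i, (GA i).trace = 0)
    (hGAorth : ∀ i j, ((GA i)ᴴ * GA j).trace = if i = j then (κA : ℂ) else 0)
    (hGBtr : ∀ i, (GB i).trace = 0)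
    (hGBorth : ∀ i j, ((GB i)ᴴ * GB j).trace = if i = j then (κB : ℂ) else 0)
    (ρ : Matrix (Fin dA × Fin dB) (Fin dA × Fin dB) ℂ)
    (TA : Fin (dA ^ 2 - 1) → ℂ) (TB : Fin (dB ^ 2 - 1) → ℂ)
    (TAB : Matrix (Fin (dA ^ 2 - 1)) (Fin (dB ^ 2 - 1)) ℂ)
    (hrep : ρ = (((dA : ℂ) * dB))⁻¹ •
      ((1 : Matrix (Fin dA) (Fin dA) ℂ) ⊗ₖ (1 : Matrix (Fin dB) (Fin dB) ℂ)
        + ∑ i, TA i • (GA i ⊗ₖ (1 : Matrix (Fin dB) (Fin dB) ℂ))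
        + ∑ j, TB j • ((1 : Matrix (Fin dA) (Fin dA) ℂ) ⊗ₖ GB j)
        + ∑ i, ∑ j, TAB i j • (GA i ⊗ₖ GB j)))
    (hsep : ∃ (M : ℕ) (w : Fin M → ℝ)
        (σ : Fin M → Matrix (Fin dA) (Fin dA) ℂ)
        (τ : Fin M → Matrix (Fin dB) (Fin dB) ℂ),
      (∀ i, 0 ≤ w i) ∧ (∑ i, w i = 1) ∧
      (∀ i, (σ i).PosSemidef ∧ (σ i).trace = 1 ∧ σ i * σ i = σ i) ∧
      (∀ i, (τ i).PosSemidef ∧ (τ i).trace = 1 ∧ τ i * τ i = τ i) ∧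
      ρ = ∑ i, (w i : ℂ) • (σ i ⊗ₖ τ i))
    :
    ∀ (p₁ p₂ : ℕ) (u : Fin p₁ → ℝ) (v : Fin p₂ → ℝ),
      traceNorm (Matrix.fromBlocks
          (Matrix.of fun a b => ((u a * v b : ℝ) : ℂ))
          (Matrix.of fun (a : Fin p₁) (j : Fin (dB ^ 2 - 1)) => ((u a : ℝ) : ℂ) * TB j)
          (Matrix.of fun (i : Fin (dA ^ 2 - 1)) (b : Fin p₂) => TA i * ((v b : ℝ) : ℂ))
          TAB)
        ≤ Real.sqrt ((∑ a, u a ^ 2 + ((dA : ℝ) ^ 2 - dA) / κA) *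
            (∑ b, v b ^ 2 + ((dB : ℝ) ^ 2 - dB) / κB)) := by
  intro p₁ p₂ u v
  obtain ⟨M, w, σ, τ, hw0, hw1, hσ, hτ, hρsep⟩ := hsep
  have : Nonempty (Fin dA) := ⟨⟨0, hdA⟩⟩
  have : Nonempty (Fin dB) := ⟨⟨0, hdB⟩⟩
  have hA : IsTracelessOrthogonalFamily κA GA := ⟨hGAtr, hGAorth⟩
  have hB : IsTracelessOrthogonalFamily κB GB := ⟨hGBtr, hGBorth⟩
  obtain ⟨hTA, hTB, hTAB⟩ := blochData_eq_sum_of_separable hA hB hκA.ne' hκB.ne'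
    (fun t => (hσ t).2.1) (fun t => (hτ t).2.1)
    (by rw [Fintype.card_fin, Fintype.card_fin, ← hρsep, hrep]; rfl)
  have hblocks : fromBlocks (of fun a b => ((u a * v b : ℝ) : ℂ))
      (of fun a j => ((u a : ℝ) : ℂ) * TB j) (of fun i b => TA i * ((v b : ℝ) : ℂ)) TAB =
      fromBlocks (vecMulVec (fun a => (u a : ℂ)) (fun b => (v b : ℂ)))
        (vecMulVec (fun a => (u a : ℂ)) TB) (vecMulVec TA (fun b => (v b : ℂ))) TAB := by
    ext (_ | _) (_ | _) <;> simp [vecMulVec_apply]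
  have hX (t : Fin M) := hA.norm_toLp_sumElim_blochVector_le hκA (hσ t).1.isHermitian
    (hσ t).2.1 (hσ t).2.2 u
  have hY (t : Fin M) := hB.norm_toLp_sumElim_blochVector_le hκB (hτ t).1.isHermitian
    (hτ t).2.1 (hτ t).2.2 v
  simp only [Fintype.card_fin] at hX hY
  have hCB : 0 ≤ ∑ b, v b ^ 2 + ((dB : ℝ) ^ 2 - dB) / κB :=
    add_nonneg (Finset.sum_nonneg fun _ _ => sq_nonneg _) <| div_nonneg
      (sub_nonneg.2 (by exact_mod_cast Nat.le_self_pow two_ne_zero dB)) hκB.le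
  rw [hblocks, fromBlocks_vecMulVec_eq_sum_smul_vecMulVec hw1 _ _ hTA hTB hTAB,
    Real.sqrt_mul' _ hCB]
  exact traceNorm_sum_smul_vecMulVec_le hw0 hw1 hX hY

/-- (Unified form of Zhu–Zheng–Fei's criterion.) If the bipartite state
`ρ` is separable, then for all real vectors `u, v` the block matrix
`[[u vᵀ, u (T^{(B)})ᵀ], [T^{(A)} vᵀ, T^{(AB)}]]` has trace norm at most
`√((‖u‖_F² + (d_A²−d_A)/κ_A)·(‖v‖_F² + (d_B²−d_B)/κ_B))`. -/
theorem stmt_4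
    (dA dB : ℕ) (hdA : 1 ≤ dA) (hdB : 1 ≤ dB)
    (κA κB : ℝ) (hκA : 0 < κA) (hκB : 0 < κB)
    (GA : Fin (dA ^ 2 - 1) → Matrix (Fin dA) (Fin dA) ℂ)
    (GB : Fin (dB ^ 2 - 1) → Matrix (Fin dB) (Fin dB) ℂ)
    (hGAtr : ∀ i, (GA i).trace = 0)
    (hGAorth : ∀ i j, ((GA i)ᴴ * GA j).trace = if i = j then (κA : ℂ) else 0)
    (hGBtr : ∀ i, (GB i).trace = 0)
    (hGBorth : ∀ i j, ((GB i)ᴴ * GB j).trace = if i = j then (κB : ℂ) else 0)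
    (ρ : Matrix (Fin dA × Fin dB) (Fin dA × Fin dB) ℂ)
    (hρ : ρ.PosSemidef) (hρtr : ρ.trace = 1)
    (TA : Fin (dA ^ 2 - 1) → ℂ) (TB : Fin (dB ^ 2 - 1) → ℂ)
    (TAB : Matrix (Fin (dA ^ 2 - 1)) (Fin (dB ^ 2 - 1)) ℂ)
    (hrep : ρ = (((dA : ℂ) * dB))⁻¹ •
      ((1 : Matrix (Fin dA) (Fin dA) ℂ) ⊗ₖ (1 : Matrix (Fin dB) (Fin dB) ℂ)
        + ∑ i, TA i • (GA i ⊗ₖ (1 : Matrix (Fin dB) (Fin dB) ℂ))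
        + ∑ j, TB j • ((1 : Matrix (Fin dA) (Fin dA) ℂ) ⊗ₖ GB j)
        + ∑ i, ∑ j, TAB i j • (GA i ⊗ₖ GB j)))
    (hsep : ∃ (M : ℕ) (w : Fin M → ℝ)
        (σ : Fin M → Matrix (Fin dA) (Fin dA) ℂ)
        (τ : Fin M → Matrix (Fin dB) (Fin dB) ℂ),
      (∀ i, 0 ≤ w i) ∧ (∑ i, w i = 1) ∧
      (∀ i, (σ i).PosSemidef ∧ (σ i).trace = 1 ∧ σ i * σ i = σ i) ∧
      (∀ i, (τ i).PosSemidef ∧ (τ i).trace = 1 ∧ τ i * τ i = τ i) ∧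
      ρ = ∑ i, (w i : ℂ) • (σ i ⊗ₖ τ i))
    :
    ∀ (p₁ p₂ : ℕ) (u : Fin p₁ → ℝ) (v : Fin p₂ → ℝ),
      traceNorm (Matrix.fromBlocks
          (Matrix.of fun a b => ((u a * v b : ℝ) : ℂ))
          (Matrix.of fun (a : Fin p₁) (j : Fin (dB ^ 2 - 1)) => ((u a : ℝ) : ℂ) * TB j)
          (Matrix.of fun (i : Fin (dA ^ 2 - 1)) (b : Fin p₂) => TA i * ((v b : ℝ) : ℂ))
          TAB)
        ≤ Real.sqrt ((∑ a, u a ^ 2 + ((dA : ℝ) ^ 2 - dA) / κA) *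
            (∑ b, v b ^ 2 + ((dB : ℝ) ^ 2 - dB) / κB)) :=
  stmt_4_general dA dB hdA hdB κA κB hκA hκB GA GB hGAtr hGAorth hGBtr hGBorth ρ TA TB TAB hrep hsep
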